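/- Module-level shadow of Theorem 1.2 (Miller–Ravenel–Wilson): Let p be an odd prime, n > 3, F = ℤ/p, A = F[u][v,v^{−1}], and B = F[u,u^{−1}][v,v^{−1}]/A. Let a_i and x_i be as in the standard recursions (a_0 = 1, x_0 = v, with a_i = p a_{i−1} and x_i = x_{i−1}^p unless i > 1 and [i] = 1, in which case a_i = p a_{i−1} + p − 1 and x_i = x_{i−1}^p − u^{b_{n,i}} v^{p^i − p^{i−1}+1}). Then the following family of elements of B is F-linearly independent: the classes of u^{−j} for all j ≥ 1, together with the classes of x_i^s·u^{−j} for all i ≥ 0, all integers s ≥ 1 with p ∤ s, and all 1 ≤ j ≤ a_i. Moreover, for each such i and s, the F[u]-submodule of B generated by the class of x_i^s·u^{−a_i} is isomorphic to F[u]/(u^{a_i}). -/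

import Mathlib

/-!
Reducing modulo `u` sends `x i` to `v ^ p ^ i`, because every correction term in the recursion
carries a positive power `u ^ b i`; so `x i ^ s ≡ v ^ (s * p ^ i)` mod `u`, and for `p ∤ s` these
exponents are nonzero and determine `(i, s)`. The coefficient of `v ^ m * u ^ (-j)` (`j ≥ 1`)
vanishes on `A`, hence is a functional on `B`. In a relation among the classes, take a term of
largest depth `j` with nonzero coefficient: the functional at `v ^ (s * p ^ i) * u ^ (-j)` (or
`v ^ 0 * u ^ (-j)`) sees only that term, since shallower terms have no `u ^ (-j)` part.
The same functionals show that `q • [x i ^ s * u ^ (-a)] = 0` forces `u ^ a ∣ q * c`, where `c` is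
the `v ^ (s * p ^ i)`-coefficient of `x i ^ s`; as `c(0) = 1`, the annihilator is `(u ^ a)`.
-/

namespace Stmt9

/-- `A = F[u][v,v⁻¹]`, the Laurent-polynomial ring in `v` over `F[u]`, `F = ℤ/p`. -/
abbrev A (p : ℕ) := LaurentPolynomial (Polynomial (ZMod p))

/-- `L = F[u,u⁻¹][v,v⁻¹]`, the Laurent-polynomial ring in `v` over `F[u,u⁻¹]`. -/
abbrev L (p : ℕ) := LaurentPolynomial (LaurentPolynomial (ZMod p))

/-- The canonical inclusion `A → L`, mapping coefficients through
`Polynomial.toLaurent : F[u] → F[u,u⁻¹]` and sending `v` to `v`. -/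
noncomputable def incl (p : ℕ) : A p →ₐ[Polynomial (ZMod p)] L p :=
  (AddMonoidAlgebra.lift (Polynomial (ZMod p)) (L p) ℤ)
    (AddMonoidAlgebra.of (LaurentPolynomial (ZMod p)) ℤ)

/-- `L` as an `A`-algebra (hence an `A`-module) via the inclusion `incl`. -/
noncomputable instance (p : ℕ) : Algebra (A p) (L p) :=
  (incl p).toRingHom.toAlgebra

noncomputable instance (p : ℕ) : IsScalarTower (Polynomial (ZMod p)) (A p) (L p) :=
  IsScalarTower.of_algebraMap_eq fun q => ((incl p).commutes q).symm

noncomputable instance (p : ℕ) : IsScalarTower (ZMod p) (A p) (L p) :=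
  IsScalarTower.of_algebraMap_eq fun c => by
    have h1 : algebraMap (ZMod p) (A p) c
        = algebraMap (Polynomial (ZMod p)) (A p) (Polynomial.C c) := by
      simp [AddMonoidAlgebra.coe_algebraMap, Polynomial.algebraMap_eq]
    have h2 : algebraMap (ZMod p) (L p) c
        = algebraMap (Polynomial (ZMod p)) (L p) (Polynomial.C c) := by
      simp [AddMonoidAlgebra.coe_algebraMap, Polynomial.algebraMap_eq]
    rw [h1, h2, IsScalarTower.algebraMap_apply (Polynomial (ZMod p)) (A p) (L p)]

/-- The image of `A` in `L`, as an `A`-submodule of `L`. -/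
noncomputable def Asub (p : ℕ) : Submodule (A p) (L p) :=
  LinearMap.range (Algebra.linearMap (A p) (L p))

/-- `B = F[u,u⁻¹][v,v⁻¹]/A`, as an `A`-module. -/
abbrev B (p : ℕ) := L p ⧸ Asub p

/-- The element `u ∈ A`. -/
noncomputable def uA (p : ℕ) : A p := LaurentPolynomial.C Polynomial.X

open LaurentPolynomial
open Polynomial (toLaurent X)
open scoped Polynomial

theorem _root_.LinearIndependent.of_dual_triangular {R M ι κ : Type*} [CommRing R]
    [AddCommGroup M] [Module R M] [LinearOrder κ] (v : ι → M) (f : ι → Module.Dual R M)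
    (d : ι → κ) (h0 : ∀ i j, d j ≤ d i → j ≠ i → f i (v j) = 0) (h1 : ∀ i, f i (v i) = 1) :
    LinearIndependent R v := by
  classical
  refine linearIndependent_iff'.mpr fun s g hrel i₀ hi₀ ↦ by_contra fun hg₀ ↦ ?_
  obtain ⟨i, hi, hmax⟩ := Finset.exists_max_image {j ∈ s | g j ≠ 0} d
    ⟨i₀, Finset.mem_filter.mpr ⟨hi₀, hg₀⟩⟩
  rw [Finset.mem_filter] at hi
  have aux (j : ι) (hjs : j ∈ s) (hji : j ≠ i) : g j * f i (v j) = 0 := by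
    by_cases hgj : g j = 0
    · rw [hgj, zero_mul]
    · rw [h0 i j (hmax j (Finset.mem_filter.mpr ⟨hjs, hgj⟩)) hji, mul_zero]
  apply hi.2
  simpa [s.sum_eq_single_of_mem i hi.1 aux, h1 i] using congr_arg (f i) hrel

lemma _root_.Polynomial.coeff_toLaurent_natCast {R : Type*} [Semiring R] (f : R[X]) (n : ℕ) :
    (toLaurent f).coeff n = f.coeff n := by
  rw [coeff_toLaurent]
  exact Finsupp.mapDomain_apply Nat.castEmbedding.injective _ n

lemma _root_.Polynomial.coeff_toLaurent_of_neg {R : Type*} [Semiring R] (f : R[X]) {n : ℤ}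
    (hn : n < 0) : (toLaurent f).coeff n = 0 := by
  rw [coeff_toLaurent, Finsupp.mapDomain_of_notMem_range]
  rintro ⟨k, rfl⟩
  exact hn.not_ge (Int.natCast_nonneg k)

variable {p : ℕ}

lemma incl_eq_mapRingHom (z : A p) :
    incl p z = AddMonoidAlgebra.mapRingHom ℤ (toLaurent : (ZMod p)[X] →+* _) z := by
  rw [incl, ← AddMonoidAlgebra.lift_mapRingHom_algebraMap (S := LaurentPolynomial (ZMod p))]
  exact (DFunLike.congr_fun (AddMonoidAlgebra.lift_unique' (AlgHom.id _ (L p))) _).symm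

lemma coeff_incl (z : A p) (m : ℤ) : (incl p z).coeff m = toLaurent (z.coeff m) := by
  rw [incl_eq_mapRingHom, AddMonoidAlgebra.coeff_mapRingHom]

noncomputable def coeffL (m e : ℤ) : L p →ₗ[ZMod p] ZMod p where
  toFun f := (f.coeff m).coeff e
  map_add' _ _ := rfl
  map_smul' _ _ := rfl

lemma coeffL_incl_mul_C_T (z : A p) (m e : ℤ) (j : ℕ) :
    coeffL m e (incl p z * C (T (-j))) = (toLaurent (z.coeff m)).coeff (e + j) := by
  show ((incl p z * C (T (-j))).coeff m).coeff e = _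
  rw [← single_eq_C, AddMonoidAlgebra.coeff_mul_single_zero, coeff_incl, T,
    AddMonoidAlgebra.coeff_mul_single_apply, mul_one, neg_neg]

lemma coeffL_eq_zero_of_mem_Asub {f : L p} (hf : f ∈ Asub p) (m : ℤ) {e : ℤ} (he : e < 0) :
    coeffL m e f = 0 := by
  obtain ⟨z, rfl⟩ := hf
  show ((incl p z).coeff m).coeff e = 0
  rw [coeff_incl, Polynomial.coeff_toLaurent_of_neg _ he]

/-- Coefficients with a negative power of `u` are well defined on `B = L ⧸ A`. -/
noncomputable def coeffB (m e : ℤ) (he : e < 0) : Module.Dual (ZMod p) (B p) :=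
  ((Asub p).restrictScalars (ZMod p)).liftQ (coeffL m e)
      (fun _ hf ↦ coeffL_eq_zero_of_mem_Asub hf m he) ∘ₗ
    (Submodule.Quotient.restrictScalarsEquiv (ZMod p) (Asub p)).symm.toLinearMap

lemma coeffB_mk (m e : ℤ) (he : e < 0) (f : L p) :
    coeffB m e he (Submodule.Quotient.mk f) = coeffL m e f := rfl

noncomputable def reduceU : A p →+* LaurentPolynomial (ZMod p) :=
  AddMonoidAlgebra.mapRingHom ℤ Polynomial.constantCoeff

lemma coeff_reduceU (z : A p) (m : ℤ) : (reduceU z).coeff m = (z.coeff m).coeff 0 :=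
  AddMonoidAlgebra.coeff_mapRingHom _ _ _

lemma reduceU_T (m : ℤ) : reduceU (T m : A p) = T m := by
  rw [reduceU, T, AddMonoidAlgebra.mapRingHom_single, map_one, T]

lemma reduceU_uA : reduceU (uA p) = 0 := by
  rw [reduceU, uA, ← single_eq_C, AddMonoidAlgebra.mapRingHom_single]
  simp

lemma reduceU_eq_T_pow (x : ℕ → A p) (h0 : reduceU (x 0) = T 1)
    (hstep : ∀ i, reduceU (x (i + 1)) = reduceU (x i) ^ p) (i : ℕ) :
    reduceU (x i) = T ((p ^ i : ℕ) : ℤ) := by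
  induction i with
  | zero => simpa using h0
  | succ i ih => rw [hstep, ih, T_pow, pow_succ]; push_cast; ring_nf

lemma coeffL_incl_mul_C_T_of_lt (z : A p) (m : ℤ) {j j' : ℕ} (h : j' < j) :
    coeffL m (-j) (incl p z * C (T (-j'))) = 0 := by
  rw [coeffL_incl_mul_C_T, Polynomial.coeff_toLaurent_of_neg _ (by omega)]

lemma coeffL_incl_mul_C_T_self (z : A p) (m : ℤ) (j : ℕ) :
    coeffL m (-j) (incl p z * C (T (-j))) = (reduceU z).coeff m := by
  rw [coeffL_incl_mul_C_T, neg_add_cancel, ← Nat.cast_zero, Polynomial.coeff_toLaurent_natCast,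
    coeff_reduceU]

lemma linearIndependent_mk_incl_mul_C_T {ι : Type*} (z : ι → A p) (d : ι → ℕ) (m : ι → ℤ)
    (hd : ∀ i, 1 ≤ d i) (hz : ∀ i, reduceU (z i) = T (m i))
    (hm : ∀ i j, d i = d j → m i = m j → i = j) :
    LinearIndependent (ZMod p)
      (fun i ↦ (Submodule.Quotient.mk (incl p (z i) * C (T (-(d i : ℤ)))) : B p)) := by
  refine .of_dual_triangular _ (fun i ↦ coeffB (m i) (-(d i : ℤ)) (by have := hd i; omega)) d
    (fun i j hji hne ↦ ?_) (fun i ↦ ?_)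
  · rw [coeffB_mk]
    rcases hji.lt_or_eq with hlt | heq
    · exact coeffL_incl_mul_C_T_of_lt _ _ hlt
    · rw [heq, coeffL_incl_mul_C_T_self, hz, T_apply, if_neg fun h ↦ hne (hm j i heq h)]
  · rw [coeffB_mk, coeffL_incl_mul_C_T_self, hz, T_apply, if_pos rfl]

lemma smul_incl_mul (q : (ZMod p)[X]) (z : A p) (f : L p) :
    q • (incl p z * f) = incl p (q • z) * f := by
  rw [map_smul, smul_mul_assoc]

lemma X_pow_smul_incl_mul_C_T (z : A p) (a : ℕ) :
    (X ^ a : (ZMod p)[X]) • (incl p z * C (T (-(a : ℤ)))) = incl p z := by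
  rw [Algebra.smul_def, LaurentPolynomial.algebraMap_apply, algebraMap_eq_toLaurent,
    Polynomial.toLaurent_X_pow, mul_left_comm, ← map_mul, ← T_add, add_neg_cancel, T_zero, map_one, mul_one]

lemma torsionOf_mk_incl_mul_C_T [Fact p.Prime] (z : A p) (m : ℤ)
    (hz : (reduceU z).coeff m ≠ 0) (a : ℕ) :
    Ideal.torsionOf (ZMod p)[X] (B p)
        (Submodule.Quotient.mk (incl p z * C (T (-(a : ℤ))))) = Ideal.span {X ^ a} := by
  ext q
  rw [Ideal.mem_torsionOf_iff, Ideal.mem_span_singleton, ← Submodule.Quotient.mk_smul]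
  constructor
  · intro h
    have hdvd : X ^ a ∣ q * (z.coeff m) := by
      rw [Polynomial.X_pow_dvd_iff]
      intro d hd
      have := congrArg (coeffB m (d - a) (by omega)) h
      rwa [coeffB_mk, map_zero, smul_incl_mul, coeffL_incl_mul_C_T, sub_add_cancel,
        Polynomial.coeff_toLaurent_natCast, AddMonoidAlgebra.coeff_smul_apply, smul_eq_mul] at this
    refine Polynomial.prime_X.pow_dvd_of_dvd_mul_right a ?_ hdvd
    rwa [Polynomial.X_dvd_iff, ← coeff_reduceU]
  · rintro ⟨c, rfl⟩
    rw [mul_comm, mul_smul, X_pow_smul_incl_mul_C_T, Submodule.Quotient.mk_eq_zero]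
    exact Submodule.smul_of_tower_mem _ c ⟨z, rfl⟩

lemma nonempty_span_mk_incl_mul_C_T_equiv [Fact p.Prime] (z : A p) (m : ℤ)
    (hz : (reduceU z).coeff m ≠ 0) (a : ℕ) :
    Nonempty (Submodule.span (ZMod p)[X]
        {(Submodule.Quotient.mk (incl p z * C (T (-(a : ℤ)))) : B p)} ≃ₗ[(ZMod p)[X]]
      (ZMod p)[X] ⧸ Ideal.span {(X : (ZMod p)[X]) ^ a}) :=
  ⟨((Submodule.quotEquivOfEq _ _ (torsionOf_mk_incl_mul_C_T z m hz a)).symm.trans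
    (Ideal.quotTorsionOfEquivSpanSingleton _ _ _)).symm⟩

lemma _root_.Nat.eq_and_eq_of_mul_pow_eq {p s s' i i' : ℕ} (hp : p.Prime) (hs : ¬p ∣ s)
    (hs' : ¬p ∣ s') (h : s * p ^ i = s' * p ^ i') : i = i' ∧ s = s' := by
  have := Fact.mk hp
  have hval := congrArg (padicValNat p) h
  rw [padicValNat.mul (by rintro rfl; exact hs (dvd_zero p)) (pow_ne_zero _ hp.ne_zero),
    padicValNat.mul (by rintro rfl; exact hs' (dvd_zero p)) (pow_ne_zero _ hp.ne_zero),
    padicValNat.eq_zero_of_not_dvd hs, padicValNat.eq_zero_of_not_dvd hs',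
    padicValNat.prime_pow, padicValNat.prime_pow, zero_add, zero_add] at hval
  subst hval
  exact ⟨rfl, Nat.eq_of_mul_eq_mul_right (pow_pos hp.pos _) h⟩

lemma b_ne_zero_of_mod_eq_one {n : ℕ} (hp : 1 < p) (b : ℕ → ℕ)
    (hb : ∀ k : ℕ, 1 ≤ k →
      b (k * (n - 1) + 1) = (p ^ n - 1) * ∑ m ∈ Finset.range k, p ^ (m * (n - 1)))
    {i : ℕ} (hi1 : i ≠ 1) (hi : i % (n - 1) = 1) : b i ≠ 0 := by
  have hn : 2 ≤ n := by
    by_contra! hn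
    rw [show n - 1 = 0 by omega, Nat.mod_zero] at hi
    exact hi1 hi
  have hi' : i = i / (n - 1) * (n - 1) + 1 := by
    have := Nat.div_add_mod i (n - 1)
    rw [hi, mul_comm] at this
    exact this.symm
  have hk : 1 ≤ i / (n - 1) := by
    by_contra! hk
    rw [Nat.lt_one_iff.mp hk, zero_mul, zero_add] at hi'
    exact hi1 hi'
  rw [hi', hb _ hk]
  refine Nat.mul_ne_zero (Nat.sub_ne_zero_of_lt (Nat.one_lt_pow (by omega) hp)) ?_
  exact (Finset.sum_pos (fun m _ ↦ pow_pos (by omega) _) ⟨0, Finset.mem_range.mpr hk⟩).ne'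

lemma reduceU_x_eq_T_pow {n : ℕ} (hp : 1 < p) (b : ℕ → ℕ)
    (hb : ∀ k : ℕ, 1 ≤ k →
      b (k * (n - 1) + 1) = (p ^ n - 1) * ∑ m ∈ Finset.range k, p ^ (m * (n - 1)))
    (x : ℕ → A p) (hx0 : x 0 = T 1)
    (hxrec : ∀ i : ℕ, 1 ≤ i →
      x i = if i = 1 ∨ i % (n - 1) ≠ 1 then (x (i - 1)) ^ p
            else (x (i - 1)) ^ p - (uA p) ^ (b i) * T ((p ^ i - p ^ (i - 1) + 1 : ℕ) : ℤ))
    (i : ℕ) : reduceU (x i) = T ((p ^ i : ℕ) : ℤ) := by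
  refine reduceU_eq_T_pow x (by rw [hx0, reduceU_T]) (fun i ↦ ?_) i
  rw [hxrec (i + 1) (by omega), Nat.add_sub_cancel]
  split_ifs with h
  · exact map_pow _ _ _
  · rw [not_or, not_not] at h
    rw [map_sub, map_pow, map_mul, map_pow, reduceU_uA,
      zero_pow (b_ne_zero_of_mod_eq_one hp b hb h.1 h.2), zero_mul, sub_zero]

/-- Indices of the family: `j` stands for `u⁻ʲ` and `(i, s, j)` for `x i ^ s * u⁻ʲ`. -/
abbrev FamilyIndex (p : ℕ) (a : ℕ → ℕ) :=
  {j : ℕ // 1 ≤ j} ⊕ {q : ℕ × ℕ × ℕ // 1 ≤ q.2.1 ∧ ¬ p ∣ q.2.1 ∧ 1 ≤ q.2.2 ∧ q.2.2 ≤ a q.1}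

noncomputable def family (a : ℕ → ℕ) (x : ℕ → A p) : FamilyIndex p a → B p
  | .inl j => Submodule.Quotient.mk (C (T (-(j.1 : ℤ))))
  | .inr q => Submodule.Quotient.mk (incl p (x q.1.1 ^ q.1.2.1) * C (T (-(q.1.2.2 : ℤ))))

lemma linearIndependent_family (hp : p.Prime) (a : ℕ → ℕ) (x : ℕ → A p)
    (hx : ∀ i, reduceU (x i) = T ((p ^ i : ℕ) : ℤ)) :
    LinearIndependent (ZMod p) (family a x) := by
  have hexp_ne_zero {i s : ℕ} (hs : 1 ≤ s) : s * p ^ i ≠ 0 :=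
    Nat.mul_ne_zero (Nat.one_le_iff_ne_zero.mp hs) (pow_ne_zero _ hp.ne_zero)
  convert linearIndependent_mk_incl_mul_C_T (p := p)
    (Sum.elim (fun _ ↦ 1) fun q ↦ x q.1.1 ^ q.1.2.1 : FamilyIndex p a → A p)
    (Sum.elim (·.1) (·.1.2.2)) (Sum.elim (fun _ ↦ 0) fun q ↦ ((q.1.2.1 * p ^ q.1.1 : ℕ) : ℤ))
    ?depth_pos ?reduceU_eq ?injective using 1
  · funext jq
    rcases jq with j | q
    · simp [family]
    · rfl
  case depth_pos => rintro (j | q); exacts [j.2, q.2.2.2.1]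
  case reduceU_eq =>
    rintro (j | q)
    · exact (map_one _).trans T_zero.symm
    · rw [Sum.elim_inr, Sum.elim_inr, map_pow, hx, T_pow]
      push_cast
      ring_nf
  case injective =>
    rintro (j | q) (j' | q') hd hm <;> simp only [Sum.elim_inl, Sum.elim_inr] at hd hm
    · rw [Subtype.ext hd]
    · exact absurd (by exact_mod_cast hm.symm) (hexp_ne_zero q'.2.1)
    · exact absurd (by exact_mod_cast hm) (hexp_ne_zero q.2.1)
    · obtain ⟨hi, hs⟩ := Nat.eq_and_eq_of_mul_pow_eq hp q.2.2.1 q'.2.2.1 (by exact_mod_cast hm)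
      rw [Subtype.ext (Prod.ext hi (Prod.ext hs hd))]

theorem stmt9 (p n : ℕ) (hp : p.Prime)
    (a : ℕ → ℕ)
    (b : ℕ → ℕ)
    (hb : ∀ k : ℕ, 1 ≤ k →
      b (k * (n - 1) + 1) = (p ^ n - 1) * ∑ m ∈ Finset.range k, p ^ (m * (n - 1)))
    (x : ℕ → A p)
    (hx0 : x 0 = LaurentPolynomial.T 1)
    (hxrec : ∀ i : ℕ, 1 ≤ i →
      x i = if i = 1 ∨ i % (n - 1) ≠ 1 then (x (i - 1)) ^ p
            else (x (i - 1)) ^ p -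
              (uA p) ^ (b i) * LaurentPolynomial.T ((p ^ i - p ^ (i - 1) + 1 : ℕ) : ℤ)) :
    -- the classes of `u⁻ʲ` and of `x i ^ s · u⁻ʲ` are `F`-linearly independent in `B`
    LinearIndependent (ZMod p)
      (fun jq : ({j : ℕ // 1 ≤ j} ⊕
          {q : ℕ × ℕ × ℕ // 1 ≤ q.2.1 ∧ ¬ p ∣ q.2.1 ∧ 1 ≤ q.2.2 ∧ q.2.2 ≤ a q.1}) =>
        match jq with
        | .inl j =>
          (Submodule.Quotient.mk
            ((LaurentPolynomial.C (LaurentPolynomial.T (-(j.1 : ℤ))) : L p)) : B p)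
        | .inr q =>
          (Submodule.Quotient.mk
            (incl p (x q.1.1 ^ q.1.2.1) *
              (LaurentPolynomial.C (LaurentPolynomial.T (-(q.1.2.2 : ℤ))) : L p)) : B p)) ∧
    -- each class of `x i ^ s · u^(-a i)` generates an `F[u]`-submodule `≅ F[u]/(u^(a i))`
    (∀ i s : ℕ, 1 ≤ s → ¬ p ∣ s →
      Nonempty
        ((↥(Submodule.span (Polynomial (ZMod p))
            {(Submodule.Quotient.mk
              (incl p (x i ^ s) *
                (LaurentPolynomial.C (LaurentPolynomial.T (-(a i : ℤ))) : L p)) : B p)}))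
          ≃ₗ[Polynomial (ZMod p)]
        (Polynomial (ZMod p) ⧸ Ideal.span {(Polynomial.X : Polynomial (ZMod p)) ^ (a i)}))) := by
  have := Fact.mk hp
  have hx := reduceU_x_eq_T_pow hp.one_lt b hb x hx0 hxrec
  refine ⟨linearIndependent_family hp a x hx, fun i s _ _ ↦ ?_⟩
  refine nonempty_span_mk_incl_mul_C_T_equiv _ ((s * p ^ i : ℕ) : ℤ) ?_ (a i)
  rw [map_pow, hx, T_pow, T_apply, if_pos (by push_cast; ring)]
  exact one_ne_zero

end Stmt9
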